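/- Let μ : G₁ → G₂ be a continuous homomorphism of profinite groups and N ⊆ G₁ a closed normal subgroup. Assume that U ↦ μ⁻¹(U) gives a one-to-one correspondence between open subgroups of G₂ and those open subgroups of G₁ that contain N. Then μ induces an isomorphism of topological groups G₁/N ≅ G₂. -/

import Mathlib

/-!
In a profinite group every closed subgroup is the intersection of the open subgroups containing
it. Applied to `N`, whose open overgroups are all preimages, this gives `ker μ ≤ N`; applied to
`{1}` in `G₂` it gives `N ≤ ker μ`; applied to the compact subgroup `range μ`, whose open
overgroups all have preimage `G₁` and hence equal `G₂` by uniqueness, it gives surjectivity.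
A continuous bijection from the compact group `G₁ ⧸ N` onto the Hausdorff group `G₂` is then a
homeomorphism.
-/

open QuotientGroup

section Profinite

variable {G : Type*} [Group G] [TopologicalSpace G] [IsTopologicalGroup G] [CompactSpace G]
  [TotallyDisconnectedSpace G]

theorem Subgroup.le_of_isClosed_of_forall_isOpen {H K : Subgroup G} (hH : IsClosed (H : Set G))
    (hK : ∀ V : Subgroup G, IsOpen (V : Set G) → H ≤ V → K ≤ V) : K ≤ H := by
  rw [show H = (⟨H, hH⟩ : ClosedSubgroup G).toSubgroup from rfl,
    ProfiniteGrp.closedSubgroup_eq_sInf_open]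
  exact le_sInf fun V hV => hK V hV.1 hV.2

end Profinite

namespace MonoidHom

variable {G₁ G₂ : Type*} [Group G₁] [Group G₂]

theorem le_ker_of_forall_isOpen_le_comap [TopologicalSpace G₂] [IsTopologicalGroup G₂]
    [CompactSpace G₂] [TotallyDisconnectedSpace G₂] [T1Space G₂] (μ : G₁ →* G₂)
    {N : Subgroup G₁}
    (hN : ∀ U : Subgroup G₂, IsOpen (U : Set G₂) → N ≤ U.comap μ) : N ≤ μ.ker := by
  rw [← comap_bot, ← Subgroup.map_le_iff_le_comap]
  refine Subgroup.le_of_isClosed_of_forall_isOpen ?_ fun U hU _ =>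
    Subgroup.map_le_iff_le_comap.mpr (hN U hU)
  simpa only [Subgroup.coe_bot] using isClosed_singleton

theorem ker_le_of_forall_isOpen_exists_comap_eq [TopologicalSpace G₁] [IsTopologicalGroup G₁]
    [CompactSpace G₁] [TotallyDisconnectedSpace G₁] (μ : G₁ →* G₂) {N : Subgroup G₁}
    (hN : IsClosed (N : Set G₁))
    (hV : ∀ V : Subgroup G₁, IsOpen (V : Set G₁) → N ≤ V →
      ∃ U : Subgroup G₂, U.comap μ = V) :
    μ.ker ≤ N :=
  Subgroup.le_of_isClosed_of_forall_isOpen hN fun V hVo hNV => by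
    obtain ⟨U, rfl⟩ := hV V hVo hNV
    exact Subgroup.comap_mono bot_le

theorem surjective_of_forall_isOpen_comap_eq_top [TopologicalSpace G₁] [CompactSpace G₁]
    [TopologicalSpace G₂] [IsTopologicalGroup G₂]
    [CompactSpace G₂] [TotallyDisconnectedSpace G₂] [T2Space G₂] (μ : G₁ →* G₂)
    (hμ : Continuous μ)
    (hU : ∀ U : Subgroup G₂, IsOpen (U : Set G₂) → U.comap μ = ⊤ → U = ⊤) :
    Function.Surjective μ := by
  rw [← range_eq_top, eq_top_iff]
  have hclosed : IsClosed (μ.range : Set G₂) := by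
    simpa only [coe_range] using (isCompact_range hμ).isClosed
  refine Subgroup.le_of_isClosed_of_forall_isOpen hclosed fun U hUo hrange => ?_
  exact (hU U hUo (eq_top_iff.mpr fun g _ => hrange ⟨g, rfl⟩)).ge

noncomputable def quotientKerContinuousMulEquivOfSurjective [TopologicalSpace G₁]
    [CompactSpace G₁] [TopologicalSpace G₂] [T2Space G₂]
    (μ : G₁ →* G₂) (hμ : Continuous μ) (hsurj : Function.Surjective μ) :
    G₁ ⧸ μ.ker ≃ₜ* G₂ where
  toMulEquiv := quotientKerEquivOfSurjective μ hsurj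
  __ := (show Continuous (quotientKerEquivOfSurjective μ hsurj) from
    (isQuotientMap_mk μ.ker).continuous_iff.mpr hμ).homeoOfEquivCompactToT2

end MonoidHom

theorem quotient_iso_of_open_subgroup_correspondence_general
    {G₁ G₂ : Type*}
    [Group G₁] [TopologicalSpace G₁] [IsTopologicalGroup G₁]
    [CompactSpace G₁] [TotallyDisconnectedSpace G₁]
    [Group G₂] [TopologicalSpace G₂] [IsTopologicalGroup G₂]
    [CompactSpace G₂] [T2Space G₂] [TotallyDisconnectedSpace G₂]
    (μ : G₁ →* G₂) (hμ : Continuous μ)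
    (N : Subgroup G₁) [N.Normal] (hN : IsClosed (N : Set G₁))
    (hcontain : ∀ U : Subgroup G₂, IsOpen (U : Set G₂) → N ≤ U.comap μ)
    (hbij : ∀ V : Subgroup G₁, IsOpen (V : Set G₁) → N ≤ V →
      ∃! U : Subgroup G₂, IsOpen (U : Set G₂) ∧ U.comap μ = V) :
    ∃ e : (G₁ ⧸ N) ≃* G₂, Continuous e ∧ Continuous e.symm ∧
      ∀ g : G₁, e (QuotientGroup.mk g) = μ g := by
  have hker : μ.ker = N :=
    le_antisymm
      (μ.ker_le_of_forall_isOpen_exists_comap_eq hN fun V hV hNV =>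
        (hbij V hV hNV).exists.imp fun _ => And.right)
      (μ.le_ker_of_forall_isOpen_le_comap hcontain)
  have hsurj : Function.Surjective μ :=
    μ.surjective_of_forall_isOpen_comap_eq_top hμ fun U hU hcomap =>
      (hbij ⊤ isOpen_univ le_top).unique ⟨hU, hcomap⟩ ⟨isOpen_univ, Subgroup.comap_top μ⟩
  subst hker
  let e := μ.quotientKerContinuousMulEquivOfSurjective hμ hsurj
  exact ⟨e.toMulEquiv, e.continuous, e.symm.continuous, fun _ => rfl⟩

/-- Let `μ : G₁ → G₂` be a continuous homomorphism of profinite groups and `N ⊆ G₁` a closed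
normal subgroup. Assume `U ↦ μ⁻¹(U)` gives a one-to-one correspondence between open subgroups
of `G₂` and open subgroups of `G₁` containing `N`. Then `μ` induces an isomorphism of
topological groups `G₁/N ≅ G₂`. -/
theorem quotient_iso_of_open_subgroup_correspondence
    {G₁ G₂ : Type*}
    [Group G₁] [TopologicalSpace G₁] [IsTopologicalGroup G₁]
    [CompactSpace G₁] [T2Space G₁] [TotallyDisconnectedSpace G₁]
    [Group G₂] [TopologicalSpace G₂] [IsTopologicalGroup G₂]
    [CompactSpace G₂] [T2Space G₂] [TotallyDisconnectedSpace G₂]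
    (μ : G₁ →* G₂) (hμ : Continuous μ)
    (N : Subgroup G₁) [N.Normal] (hN : IsClosed (N : Set G₁))
    (hcontain : ∀ U : Subgroup G₂, IsOpen (U : Set G₂) → N ≤ U.comap μ)
    (hbij : ∀ V : Subgroup G₁, IsOpen (V : Set G₁) → N ≤ V →
      ∃! U : Subgroup G₂, IsOpen (U : Set G₂) ∧ U.comap μ = V) :
    ∃ e : (G₁ ⧸ N) ≃* G₂, Continuous e ∧ Continuous e.symm ∧
      ∀ g : G₁, e (QuotientGroup.mk g) = μ g :=
  quotient_iso_of_open_subgroup_correspondence_general μ hμ N hN hcontain hbij
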